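/- If Δ ⊆ ℝ^d is an almost reflexive lattice polytope, then Δ• := [Δ*] = conv(Δ* ∩ ℤ^d) is an almost reflexive lattice polytope and (Δ•)• = Δ; thus Δ ↦ Δ• is an involution on the set of almost reflexive polytopes in ℝ^d. -/

import Mathlib

open Pointwise

noncomputable section

/-- The standard inner product on `n → ℝ`. -/
def dot {n : Type*} [Fintype n] (x y : n → ℝ) : ℝ := ∑ i, x i * y i

/-- The lattice points of `n → ℝ`: points with integer coordinates. -/
def latt (n : Type*) [Fintype n] : Set (n → ℝ) := {x | ∀ i, ∃ m : ℤ, x i = (m : ℝ)}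

/-- Polar dual `S* = {y | ⟨x,y⟩ ≥ -1 ∀ x ∈ S}`. -/
def polarDual {n : Type*} [Fintype n] (S : Set (n → ℝ)) : Set (n → ℝ) :=
  {y | ∀ x ∈ S, -1 ≤ dot x y}

/-- `[S]`: the convex hull of the lattice points of `S`. -/
def latticeHull {n : Type*} [Fintype n] (S : Set (n → ℝ)) : Set (n → ℝ) :=
  convexHull ℝ (S ∩ latt n)

/-- A polytope: the convex hull of a finite set. -/
def IsPolytope {n : Type*} [Fintype n] (P : Set (n → ℝ)) : Prop :=
  ∃ F : Set (n → ℝ), F.Finite ∧ P = convexHull ℝ F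

/-- A lattice polytope: the convex hull of a finite set of lattice points. -/
def IsLatticePolytope {n : Type*} [Fintype n] (P : Set (n → ℝ)) : Prop :=
  ∃ F : Set (n → ℝ), F.Finite ∧ F ⊆ latt n ∧ P = convexHull ℝ F

/-- A full-dimensional polytope `P` with `0` in its interior is Q-reflexive if
`[[P]*] = P*`. -/
def IsQReflexive {n : Type*} [Fintype n] (P : Set (n → ℝ)) : Prop :=
  IsPolytope P ∧ 0 ∈ interior P ∧ latticeHull (polarDual (latticeHull P)) = polarDual P

/-- A full-dimensional lattice polytope `P` with `0` in its interior is almost reflexive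
if `[[P*]*] = P`. -/
def IsAlmostReflexive {n : Type*} [Fintype n] (P : Set (n → ℝ)) : Prop :=
  IsLatticePolytope P ∧ 0 ∈ interior P ∧
    latticeHull (polarDual (latticeHull (polarDual P))) = P

/-- A full-dimensional lattice polytope `P` with `0` in its interior is reflexive
if `P*` is a lattice polytope. -/
def IsReflexive {n : Type*} [Fintype n] (P : Set (n → ℝ)) : Prop :=
  IsLatticePolytope P ∧ 0 ∈ interior P ∧ IsLatticePolytope (polarDual P)

/-!
Write `B = [Δ*]`. Since `0` is interior to `Δ`, the polar `Δ*` is bounded, so `B` is a lattice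
polytope, and the hypothesis `[B*] = Δ` gives `[[B*]*] = [Δ*] = B`. The real content is
`0 ∈ int B`, which by the bipolar theorem follows once `B*` is bounded. Now `B* ⊇ [B*] = Δ`
contains a ball `B(0, r)`, and all lattice points of `B*` lie in `[B*] = Δ`, so they are bounded.
A convex set containing `B(0, r)` with boundedly many lattice points is bounded: for a far point
`y`, simultaneous Dirichlet approximation yields `t ≤ K` and a lattice point `m` within `r / 2` of
`(t / 2K) • y`, so `m` lies in the convex hull of `y` and the ball, and `‖m‖ ≥ ‖y‖ / 2K - r / 2`.
-/

open Bornology Metric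

theorem Convex.mem_of_norm_sub_smul_lt {E : Type*} [NormedAddCommGroup E] [NormedSpace ℝ E]
    {C : Set E} (hC : Convex ℝ C) {r : ℝ} (hball : ball (0 : E) r ⊆ C) {y p : E} (hy : y ∈ C)
    {μ : ℝ} (hμ0 : 0 ≤ μ) (hμ1 : μ < 1) (hp : ‖p - μ • y‖ < (1 - μ) * r) : p ∈ C := by
  have hμ1' : 0 < 1 - μ := sub_pos.2 hμ1
  set u : E := (1 - μ)⁻¹ • (p - μ • y)
  have hu : u ∈ ball (0 : E) r := by
    rw [mem_ball_zero_iff, norm_smul, Real.norm_eq_abs, abs_of_pos (inv_pos.2 hμ1'),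
      inv_mul_lt_iff₀ hμ1']
    exact hp
  have hpu : (1 - μ) • u + μ • y = p := by
    rw [smul_inv_smul₀ hμ1'.ne', sub_add_cancel]
  exact hpu ▸ hC (hball hu) hy hμ1'.le hμ0 (sub_add_cancel 1 μ)

section

variable {n : Type*} [Fintype n]

theorem dot_eq_dotProduct (x y : n → ℝ) : dot x y = x ⬝ᵥ y := rfl

theorem abs_dot_le (x y : n → ℝ) : |dot x y| ≤ Fintype.card n * ‖x‖ * ‖y‖ :=
  calc |dot x y| ≤ ∑ i, |x i * y i| := Finset.abs_sum_le_sum_abs _ _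
    _ ≤ ∑ _i : n, ‖x‖ * ‖y‖ := by
        gcongr with i
        rw [abs_mul]
        exact mul_le_mul (norm_le_pi_norm x i) (norm_le_pi_norm y i) (abs_nonneg _)
          (norm_nonneg _)
    _ = Fintype.card n * ‖x‖ * ‖y‖ := by simp [mul_assoc]

theorem convex_polarDual (S : Set (n → ℝ)) : Convex ℝ (polarDual S) := by
  intro y hy z hz a b ha hb hab x hx
  have hxy := hy x hx
  have hxz := hz x hx
  simp only [dot_eq_dotProduct, dotProduct_add, dotProduct_smul, smul_eq_mul] at hxy hxz ⊢
  nlinarith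

theorem zero_mem_polarDual (S : Set (n → ℝ)) : (0 : n → ℝ) ∈ polarDual S := fun x _ => by
  simp [dot_eq_dotProduct]

theorem zero_mem_latt : (0 : n → ℝ) ∈ latt n := fun _ => ⟨0, by simp⟩

theorem inter_latt_subset_latticeHull (S : Set (n → ℝ)) : S ∩ latt n ⊆ latticeHull S :=
  subset_convexHull ℝ _

theorem latticeHull_subset {S : Set (n → ℝ)} (hS : Convex ℝ S) : latticeHull S ⊆ S :=
  convexHull_min Set.inter_subset_left hS

theorem IsLatticePolytope.isCompact {P : Set (n → ℝ)} (hP : IsLatticePolytope P) :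
    IsCompact P := by
  obtain ⟨F, hF, -, rfl⟩ := hP
  exact hF.isCompact_convexHull ℝ

theorem finite_inter_latt {S : Set (n → ℝ)} (hS : IsBounded S) : (S ∩ latt n).Finite := by
  obtain ⟨R, hR⟩ := (isBounded_iff_subset_closedBall 0).1 hS
  refine (Set.Finite.pi fun _ : n => (Set.finite_Icc (-⌈R⌉) ⌈R⌉).image ((↑) : ℤ → ℝ)).subset ?_
  rintro y ⟨hyS, hyZ⟩ i -
  obtain ⟨m, hm⟩ := hyZ i
  have hyi : |(m : ℝ)| ≤ R := hm ▸ (norm_le_pi_norm y i).trans (mem_closedBall_zero_iff.1 (hR hyS))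
  rw [abs_le] at hyi
  refine ⟨m, ⟨?_, ?_⟩, hm.symm⟩
  · have : -(⌈R⌉ : ℝ) ≤ m := by linarith [Int.le_ceil R]
    exact_mod_cast this
  · exact_mod_cast hyi.2.trans (Int.le_ceil R)

theorem isLatticePolytope_latticeHull {S : Set (n → ℝ)} (hS : IsBounded S) :
    IsLatticePolytope (latticeHull S) :=
  ⟨S ∩ latt n, finite_inter_latt hS, Set.inter_subset_right, rfl⟩

theorem exists_ball_subset_of_zero_mem_interior {S : Set (n → ℝ)} (h0 : (0 : n → ℝ) ∈ interior S) :
    ∃ r > 0, ball (0 : n → ℝ) r ⊆ S :=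
  Metric.mem_nhds_iff.1 (mem_interior_iff_mem_nhds.1 h0)

theorem isBounded_polarDual {S : Set (n → ℝ)} (h0 : (0 : n → ℝ) ∈ interior S) :
    IsBounded (polarDual S) := by
  classical
  obtain ⟨r, hr, hball⟩ := exists_ball_subset_of_zero_mem_interior h0
  refine (isBounded_iff_subset_closedBall 0).2 ⟨2 / r, fun y hy => ?_⟩
  rw [mem_closedBall_zero_iff, pi_norm_le_iff_of_nonneg (by positivity)]
  intro i
  have htest : ∀ c : ℝ, |c| < r → -1 ≤ c * y i := fun c hc => by
    have hmem : Pi.single i c ∈ ball (0 : n → ℝ) r := by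
      rwa [mem_ball_zero_iff, Pi.norm_single, Real.norm_eq_abs]
    simpa [dot_eq_dotProduct, single_dotProduct] using hy _ (hball hmem)
  have h₁ := htest (r / 2) (by rw [abs_of_pos (by positivity)]; linarith)
  have h₂ := htest (-(r / 2)) (by rw [abs_neg, abs_of_pos (by positivity)]; linarith)
  rw [Real.norm_eq_abs, le_div_iff₀ hr]
  cases abs_cases (y i) <;> nlinarith

theorem zero_mem_interior_polarDual {S : Set (n → ℝ)} (hS : IsBounded S) :
    (0 : n → ℝ) ∈ interior (polarDual S) := by
  obtain ⟨M, hM, hSM⟩ := hS.subset_closedBall_lt 0 0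
  set ρ : ℝ := (Fintype.card n * M + 1)⁻¹
  have hρ : 0 < ρ := by positivity
  refine mem_interior.2 ⟨ball 0 ρ, fun z hz x hx => ?_, isOpen_ball, mem_ball_self hρ⟩
  have hz : ‖z‖ < ρ := mem_ball_zero_iff.1 hz
  have hx : ‖x‖ ≤ M := mem_closedBall_zero_iff.1 (hSM hx)
  have hsmall : Fintype.card n * ‖x‖ * ‖z‖ ≤ 1 :=
    calc Fintype.card n * ‖x‖ * ‖z‖ ≤ Fintype.card n * M * ρ := by gcongr
      _ ≤ (Fintype.card n * M + 1) * ρ := by gcongr; linarith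
      _ = 1 := mul_inv_cancel₀ (by positivity)
  linarith [neg_abs_le (dot x z), abs_dot_le x z]

theorem exists_dot_eq (f : StrongDual ℝ (n → ℝ)) : ∃ w : n → ℝ, ∀ x, f x = dot x w := by
  classical
  refine ⟨fun i => f (Pi.single i 1), fun x => ?_⟩
  rw [← ContinuousLinearMap.coe_coe, LinearMap.pi_apply_eq_sum_univ]
  refine Finset.sum_congr rfl fun i _ => congrArg (x i * f ·) (funext fun j => ?_)
  simp [Pi.single_apply, eq_comm]

theorem polarDual_polarDual_subset {K : Set (n → ℝ)} (hK : Convex ℝ K) (hcl : IsClosed K)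
    (h0 : (0 : n → ℝ) ∈ K) : polarDual (polarDual K) ⊆ K := by
  intro z hz
  by_contra hzK
  obtain ⟨f, u, hfK, hfz⟩ := geometric_hahn_banach_closed_point hK hcl hzK
  obtain ⟨w, hw⟩ := exists_dot_eq f
  have hu : 0 < u := by simpa using hfK 0 h0
  have hdot : ∀ x, dot x ((-u⁻¹) • w) = -(f x / u) := fun x => by
    simp only [hw, dot_eq_dotProduct, dotProduct_smul, smul_eq_mul]
    ring
  have hy : (-u⁻¹) • w ∈ polarDual K := fun x hx => by
    rw [hdot, neg_le_neg_iff, div_le_one hu]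
    exact (hfK x hx).le
  have hzy := hz _ hy
  rw [dot_eq_dotProduct, dotProduct_comm, ← dot_eq_dotProduct, hdot, neg_le_neg_iff,
    div_le_one hu] at hzy
  exact hzy.not_gt hfz

theorem exists_nat_smul_near_latt {ε : ℝ} (hε : 0 < ε) :
    ∃ K : ℕ, ∀ c : n → ℝ, ∃ t : ℕ, 0 < t ∧ t ≤ K ∧ ∃ m ∈ latt n, ‖(t : ℝ) • c - m‖ < ε := by
  classical
  obtain ⟨N, hN⟩ := exists_nat_one_div_lt hε
  refine ⟨(N + 1) ^ Fintype.card n, fun c => ?_⟩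
  -- Pigeonhole: the fractional parts of `k • c` for `k ≤ (N + 1) ^ card n` fall into
  -- `(N + 1) ^ card n` cubes of side `1 / (N + 1)`.
  let cell : ℕ → n → ℤ := fun k i => ⌊(N + 1 : ℝ) * Int.fract (k * c i)⌋
  have hcell : ∀ k ∈ Finset.range ((N + 1) ^ Fintype.card n + 1),
      cell k ∈ Fintype.piFinset fun _ : n => Finset.Ico (0 : ℤ) (N + 1) := fun k _ => by
    simp only [Fintype.mem_piFinset, Finset.mem_Ico, cell]
    refine fun i => ⟨Int.floor_nonneg.2 (by positivity), Int.floor_lt.2 ?_⟩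
    push_cast
    nlinarith [Int.fract_lt_one ((k : ℝ) * c i)]
  obtain ⟨a, ha, b, hb, hab, heq⟩ :=
    Finset.exists_ne_map_eq_of_card_lt_of_maps_to (by simp) hcell
  wlog hlt : a < b generalizing a b
  · exact this b hb a ha hab.symm heq.symm (hab.symm.lt_of_le (not_lt.1 hlt))
  refine ⟨b - a, Nat.sub_pos_of_lt hlt, (Nat.sub_le b a).trans (Nat.lt_succ_iff.1
    (Finset.mem_range.1 hb)), fun i => ((⌊b * c i⌋ - ⌊a * c i⌋ : ℤ) : ℝ), fun i => ⟨_, rfl⟩, ?_⟩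
  rw [pi_norm_lt_iff hε]
  intro i
  have hfract : (((b - a : ℕ) : ℝ) • c - fun i => ((⌊b * c i⌋ - ⌊a * c i⌋ : ℤ) : ℝ)) i =
      Int.fract (b * c i) - Int.fract (a * c i) := by
    rw [← Int.self_sub_floor, ← Int.self_sub_floor, Nat.cast_sub hlt.le]
    simp only [Pi.sub_apply, Pi.smul_apply, smul_eq_mul]
    push_cast
    ring
  have hclose := Int.abs_sub_lt_one_of_floor_eq_floor (congrFun heq i).symm
  rw [← mul_sub, abs_mul, abs_of_pos (by positivity), ← lt_div_iff₀' (by positivity)] at hclose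
  rw [hfract, Real.norm_eq_abs]
  exact hclose.trans hN

theorem isBounded_of_convex_of_isBounded_inter_latt {C : Set (n → ℝ)} (hC : Convex ℝ C)
    (h0 : (0 : n → ℝ) ∈ interior C) (hCZ : IsBounded (C ∩ latt n)) : IsBounded C := by
  obtain ⟨r, hr, hball⟩ := exists_ball_subset_of_zero_mem_interior h0
  obtain ⟨R, hRZ⟩ := (isBounded_iff_subset_closedBall 0).1 hCZ
  obtain ⟨K, hK⟩ := exists_nat_smul_near_latt (n := n) (half_pos hr)
  refine (isBounded_iff_subset_closedBall 0).2 ⟨2 * K * (R + r / 2), fun y hy => ?_⟩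
  obtain ⟨t, ht0, htK, m, hm, hmy⟩ := hK ((2 * K : ℝ)⁻¹ • y)
  have hK0 : (0 : ℝ) < K := by exact_mod_cast ht0.trans_le htK
  have htK' : (t : ℝ) ≤ K := by exact_mod_cast htK
  set μ : ℝ := (t : ℝ) * (2 * K : ℝ)⁻¹
  have hμ0 : 0 < μ := by positivity
  have hμ1 : μ ≤ 1 / 2 :=
    calc μ ≤ K * (2 * K : ℝ)⁻¹ := mul_le_mul_of_nonneg_right htK' (by positivity)
      _ = 1 / 2 := by field_simp
  have hμK : (2 * K : ℝ)⁻¹ ≤ μ :=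
    le_mul_of_one_le_left (by positivity) (Nat.one_le_cast.2 ht0)
  rw [smul_smul] at hmy
  have hmC : m ∈ C := by
    refine hC.mem_of_norm_sub_smul_lt hball hy hμ0.le (by linarith) ?_
    rw [← norm_neg, neg_sub]
    nlinarith
  have hmR : ‖m‖ ≤ R := mem_closedBall_zero_iff.1 (hRZ ⟨hmC, hm⟩)
  have hμy : μ * ‖y‖ ≤ R + r / 2 :=
    calc μ * ‖y‖ = ‖μ • y‖ := by rw [norm_smul, Real.norm_of_nonneg hμ0.le]
      _ ≤ ‖m‖ + ‖μ • y - m‖ := norm_le_insert' _ _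
      _ ≤ R + r / 2 := by linarith
  rw [mem_closedBall_zero_iff]
  calc ‖y‖ = 2 * K * ((2 * K : ℝ)⁻¹ * ‖y‖) := by field_simp
    _ ≤ 2 * K * (R + r / 2) := by
      gcongr
      exact (mul_le_mul_of_nonneg_right hμK (norm_nonneg y)).trans hμy

end

theorem almostReflexive_bullet_involution_general {d : ℕ} (Δ : Set (Fin d → ℝ))
    (h : IsAlmostReflexive Δ) :
    IsAlmostReflexive (latticeHull (polarDual Δ)) ∧
      latticeHull (polarDual (latticeHull (polarDual Δ))) = Δ := by
  obtain ⟨hΔ, h0, hbullet⟩ := h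
  set B := latticeHull (polarDual Δ)
  have hB : IsLatticePolytope B := isLatticePolytope_latticeHull (isBounded_polarDual h0)
  have hΔC : Δ ⊆ polarDual B := hbullet ▸ latticeHull_subset (convex_polarDual B)
  have hC : IsBounded (polarDual B) :=
    isBounded_of_convex_of_isBounded_inter_latt (convex_polarDual B) (interior_mono hΔC h0)
      (hΔ.isCompact.isBounded.subset (hbullet ▸ inter_latt_subset_latticeHull _))
  have hB0 : (0 : Fin d → ℝ) ∈ interior B :=
    interior_mono (polarDual_polarDual_subset (convex_convexHull ℝ _) hB.isCompact.isClosed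
      (inter_latt_subset_latticeHull _ ⟨zero_mem_polarDual Δ, zero_mem_latt⟩))
      (zero_mem_interior_polarDual hC)
  exact ⟨⟨hB, hB0, by rw [hbullet]⟩, hbullet⟩

/-- If `Δ ⊆ ℝ^d` is an almost reflexive lattice polytope, then
`Δ• := [Δ*] = conv(Δ* ∩ ℤ^d)` is an almost reflexive lattice polytope and `(Δ•)• = Δ`;
thus `Δ ↦ Δ•` is an involution on the set of almost reflexive polytopes in `ℝ^d`. -/
theorem almostReflexive_bullet_involution {d : ℕ} (hd : 0 < d) (Δ : Set (Fin d → ℝ))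
    (h : IsAlmostReflexive Δ) :
    IsAlmostReflexive (latticeHull (polarDual Δ)) ∧
      latticeHull (polarDual (latticeHull (polarDual Δ))) = Δ :=
  almostReflexive_bullet_involution_general Δ h
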